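/- In a directed weighted graph g with rumor seed set a_r and positive seed union X, suppose a node u satisfies dis(a_r, u) ≤ dis(X, u) and dis(a_r, u) < ∞, and let P = (v₁ = v_r, v₂, ..., v_l = u) be a shortest weighted path from some v_r ∈ a_r achieving dis(a_r, u). Then every node v_j on P satisfies dis(a_r, v_j) = dis(v₁, v_j) ≤ dis(X, v_j), i.e., every node on a shortest rumor path to a rumor-winning node is itself rumor-winning. -/

import Mathlib

/-- Cost of a walk given as its full list of vertices, in a directed graph with
edge weights `w` (`⊤` meaning no edge). -/
def chainCost {V : Type*} (w : V → V → ℕ∞) : List V → ℕ∞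
  | [] => 0
  | [_] => 0
  | x :: y :: rest => w x y + chainCost w (y :: rest)

/-- Weighted shortest-path distance from `u` to `v` (`⊤` if unreachable). -/
noncomputable def wdist {V : Type*} (w : V → V → ℕ∞) (u v : V) : ℕ∞ :=
  ⨅ l : {l : List V // l.head? = some u ∧ l.getLast? = some v}, chainCost w l.1

/-- Weighted shortest-path distance from a set `S` to `u` (`⊤` for `S = ∅`). -/
noncomputable def sdist {V : Type*} [DecidableEq V] (w : V → V → ℕ∞) (S : Finset V) (u : V) : ℕ∞ :=
  S.inf fun s => wdist w s u

/-!
Split the shortest walk at `vj` into a prefix `A` ending at `vj` and a suffix `B` starting there.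
For `T = ar` and for `T = X`, the triangle inequality at `vj` gives
`A + B = dis(ar, u) ≤ dis(T, u) ≤ dis(T, vj) + B`, and since `B` is finite it cancels:
`dis(vr, vj) ≤ A ≤ dis(T, vj)`. With `T = ar` this squeezes `dis(ar, vj) = dis(vr, vj)`.
-/

section WeightedDistance

variable {V : Type*} (w : V → V → ℕ∞)

theorem chainCost_append_of_getLast? {l : List V} {b : V} (hl : l.getLast? = some b)
    (q : List V) : chainCost w (l ++ q) = chainCost w l + chainCost w (b :: q) := by
  induction l using chainCost.induct with
  | case1 => simp at hl
  | case2 x =>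
    obtain rfl : x = b := by simpa using hl
    simp [chainCost]
  | case3 x y r ih =>
    rw [List.getLast?_cons_cons] at hl
    simp only [List.cons_append, chainCost] at ih ⊢
    rw [ih hl, add_assoc]

theorem chainCost_append_cons (p : List V) (v : V) (q : List V) :
    chainCost w (p ++ v :: q) = chainCost w (p ++ [v]) + chainCost w (v :: q) := by
  rw [← chainCost_append_of_getLast? w List.getLast?_concat, List.append_assoc,
    List.singleton_append]

theorem wdist_le_chainCost {a b : V} {l : List V} (ha : l.head? = some a)
    (hb : l.getLast? = some b) : wdist w a b ≤ chainCost w l :=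
  iInf_le_of_le ⟨l, ha, hb⟩ le_rfl

theorem wdist_triangle (a b c : V) : wdist w a c ≤ wdist w a b + wdist w b c := by
  refine ENat.le_iInf_add_iInf fun ⟨l, ha, hb⟩ ⟨l', hb', hc⟩ => ?_
  obtain ⟨q, rfl⟩ : ∃ q, l' = b :: q := by
    cases l' with
    | nil => simp at hb'
    | cons x q => obtain rfl := Option.some_injective _ hb'; exact ⟨q, rfl⟩
  obtain ⟨p, rfl⟩ : ∃ p, l = p ++ [b] :=
    ⟨l.dropLast, (List.dropLast_append_getLast? b hb).symm⟩
  rw [← chainCost_append_cons]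
  refine wdist_le_chainCost w ?_ ?_
  · simpa [List.head?_append] using ha
  · rwa [List.getLast?_append_cons]

variable [DecidableEq V]

theorem sdist_le_wdist {S : Finset V} {s : V} (hs : s ∈ S) (u : V) :
    sdist w S u ≤ wdist w s u :=
  Finset.inf_le hs

theorem sdist_triangle (S : Finset V) (v u : V) :
    sdist w S u ≤ sdist w S v + wdist w v u := by
  simp only [sdist, Finset.inf_eq_iInf, ENat.iInf₂_add]
  exact le_iInf₂ fun s hs => (iInf₂_le s hs).trans (wdist_triangle w s v u)

theorem chainCost_prefix_le_sdist {T : Finset V} {p q : List V} {v u : V}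
    (hu : (p ++ v :: q).getLast? = some u) (hq : chainCost w (v :: q) ≠ ⊤)
    (h : chainCost w (p ++ v :: q) ≤ sdist w T u) : chainCost w (p ++ [v]) ≤ sdist w T v := by
  have hvq : wdist w v u ≤ chainCost w (v :: q) :=
    wdist_le_chainCost w rfl (by rwa [List.getLast?_append_cons] at hu)
  rw [← ENat.add_le_add_iff_right hq]
  calc chainCost w (p ++ [v]) + chainCost w (v :: q)
      = chainCost w (p ++ v :: q) := (chainCost_append_cons w p v q).symm
    _ ≤ sdist w T u := h
    _ ≤ sdist w T v + wdist w v u := sdist_triangle w T v u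
    _ ≤ sdist w T v + chainCost w (v :: q) := by gcongr

end WeightedDistance

theorem shortest_rumor_path_nodes_rumor_winning_general {V : Type*} [DecidableEq V]
    (w : V → V → ℕ∞)
    (ar X : Finset V) (u vr : V) (hvr : vr ∈ ar)
    (hwin : sdist w ar u ≤ sdist w X u) (hfin : sdist w ar u < ⊤)
    (l : List V) (hhead : l.head? = some vr) (hlast : l.getLast? = some u)
    (hshort : chainCost w l = sdist w ar u) :
    ∀ vj ∈ l, sdist w ar vj = wdist w vr vj ∧ wdist w vr vj ≤ sdist w X vj := by
  intro vj hvj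
  obtain ⟨p, q, rfl⟩ := List.append_of_mem hvj
  have hsuffix : chainCost w (vj :: q) ≠ ⊤ :=
    ne_top_of_le_ne_top (hshort ▸ hfin.ne) (chainCost_append_cons w p vj q ▸ le_add_self)
  have hprefix : wdist w vr vj ≤ chainCost w (p ++ [vj]) :=
    wdist_le_chainCost w (by simpa [List.head?_append] using hhead) List.getLast?_concat
  have har := chainCost_prefix_le_sdist w hlast hsuffix hshort.le
  have hX := chainCost_prefix_le_sdist w hlast hsuffix (hshort.trans_le hwin)
  exact ⟨le_antisymm (sdist_le_wdist w hvr vj) (hprefix.trans har), hprefix.trans hX⟩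

/-- every node on a shortest weighted path from the rumor seeds to a
rumor-winning node is itself rumor-winning. -/
theorem shortest_rumor_path_nodes_rumor_winning {V : Type*} [DecidableEq V] [Fintype V]
    (w : V → V → ℕ∞) (hw : ∀ x y, 1 ≤ w x y)
    (ar X : Finset V) (u vr : V) (hvr : vr ∈ ar)
    (hwin : sdist w ar u ≤ sdist w X u) (hfin : sdist w ar u < ⊤)
    (l : List V) (hhead : l.head? = some vr) (hlast : l.getLast? = some u)
    (hshort : chainCost w l = sdist w ar u) :
    ∀ vj ∈ l, sdist w ar vj = wdist w vr vj ∧ wdist w vr vj ≤ sdist w X vj :=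
  shortest_rumor_path_nodes_rumor_winning_general w ar X u vr hvr hwin hfin l hhead hlast hshort
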